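/- arXiv:2208.09720 — 4 statements merged into one kernel-verified Lean document; each statement's English description precedes it below -/
import Mathlib

section
/- With δ(S) = {1 mod 2, 2r_1 mod 2m_1, ..., 2r_k mod 2m_k}: S is a minimal covering system if and only if δ(S) is a minimal covering system. -/
private lemma double_mod (m t r : ℤ) : 2 * t ≡ 2 * r [ZMOD 2 * m] ↔ t ≡ r [ZMOD m] := by
  rw [Int.modEq_iff_dvd, Int.modEq_iff_dvd, ← mul_sub,
    mul_dvd_mul_iff_left (two_ne_zero (α := ℤ))]

private lemma even_of_mod (m r n : ℤ) (h : n ≡ 2 * r [ZMOD 2 * m]) : (2 : ℤ) ∣ n := by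
  have h2 : n ≡ 2 * r [ZMOD 2] := h.of_dvd (dvd_mul_right 2 m)
  have := Int.ModEq.dvd h2
  omega

private lemma odd_iff (n : ℤ) : n ≡ 1 [ZMOD 2] ↔ ¬ (2 : ℤ) ∣ n := by
  unfold Int.ModEq
  omega

theorem delta_minimal_iff (k : ℕ) (m : Fin k → ℕ) (r : Fin k → ℤ)
    (hm : ∀ i, 2 ≤ m i) :
    ((∀ n : ℤ, ∃ i, n ≡ r i [ZMOD (m i : ℤ)]) ∧
      ∀ i, ¬ (∀ n : ℤ, ∃ j, j ≠ i ∧ n ≡ r j [ZMOD (m j : ℤ)])) ↔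
    ((∀ n : ℤ, n ≡ 1 [ZMOD 2] ∨ ∃ i, n ≡ 2 * r i [ZMOD (2 * m i : ℤ)]) ∧
      ¬ (∀ n : ℤ, ∃ i, n ≡ 2 * r i [ZMOD (2 * m i : ℤ)]) ∧
      ∀ i, ¬ (∀ n : ℤ, n ≡ 1 [ZMOD 2] ∨
        ∃ j, j ≠ i ∧ n ≡ 2 * r j [ZMOD (2 * m j : ℤ)])) := by
  constructor
  · rintro ⟨hcov, hmin⟩
    refine ⟨?_, ?_, ?_⟩
    · intro n
      by_cases hpar : (2 : ℤ) ∣ n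
      · obtain ⟨t, rfl⟩ := hpar
        obtain ⟨i, hi⟩ := hcov t
        exact Or.inr ⟨i, (double_mod _ t (r i)).2 hi⟩
      · exact Or.inl ((odd_iff n).2 hpar)
    · intro h
      obtain ⟨i, hi⟩ := h 1
      have := even_of_mod _ _ _ hi
      omega
    · intro i h
      apply hmin i
      intro n
      rcases h (2 * n) with h1 | ⟨j, hji, hj⟩
      · exact absurd ⟨n, rfl⟩ ((odd_iff (2 * n)).1 h1)
      · exact ⟨j, hji, (double_mod _ n (r j)).1 hj⟩
  · rintro ⟨hcov, _, hmin⟩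
    constructor
    · intro n
      rcases hcov (2 * n) with h1 | ⟨i, hi⟩
      · exact absurd ⟨n, rfl⟩ ((odd_iff (2 * n)).1 h1)
      · exact ⟨i, (double_mod _ n (r i)).1 hi⟩
    · intro i h
      apply hmin i
      intro n
      by_cases hpar : (2 : ℤ) ∣ n
      · obtain ⟨t, rfl⟩ := hpar
        obtain ⟨j, hji, hj⟩ := h t
        exact Or.inr ⟨j, hji, (double_mod _ t (r j)).2 hj⟩
      · exact Or.inl ((odd_iff n).2 hpar)
end

section
/- For every k ≥ 5, there exists a distinct minimal covering system with exactly k congruence classes. -/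
theorem exists_distinct_minimal_covering (k : ℕ) (hk : 5 ≤ k) :
    ∃ (m : Fin k → ℕ) (r : Fin k → ℤ),
      (∀ i, 2 ≤ m i) ∧ Function.Injective m ∧
      (∀ n : ℤ, ∃ i, n ≡ r i [ZMOD (m i : ℤ)]) ∧
      (∀ i, ¬ (∀ n : ℤ, ∃ j, j ≠ i ∧ n ≡ r j [ZMOD (m j : ℤ)])) := by
  suffices h : ∃ (m : Fin k → ℕ) (r : Fin k → ℤ),
      (∀ i, 2 ≤ m i) ∧ Function.Injective m ∧
      (∀ n : ℤ, ∃ i, n ≡ r i [ZMOD (m i : ℤ)]) ∧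
      (∀ i, ∃ n : ℤ, ∀ j, n ≡ r j [ZMOD (m j : ℤ)] → j = i) by
    obtain ⟨m, r, h1, h2, h3, h4⟩ := h
    refine ⟨m, r, h1, h2, h3, fun i hall => ?_⟩
    obtain ⟨n, hn⟩ := h4 i
    obtain ⟨j, hj, hc⟩ := hall n
    exact hj (hn j hc)
  induction k, hk using Nat.le_induction with
  | base =>
    refine ⟨![2,3,4,6,12], ![0,0,1,5,7], ?_, ?_, ?_, ?_⟩
    · intro i; fin_cases i <;> norm_num
    · intro a b hab; fin_cases a <;> fin_cases b <;> simp_all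
    · intro n
      simp only [Fin.exists_fin_succ, IsEmpty.exists_iff, or_false,
        Matrix.cons_val_zero, Matrix.cons_val_succ, Int.ModEq]
      push_cast
      omega
    · intro i
      fin_cases i
      · refine ⟨2, fun j hj => ?_⟩
        fin_cases j <;> simp_all [Int.ModEq]
      · refine ⟨3, fun j hj => ?_⟩
        fin_cases j <;> simp_all [Int.ModEq]
      · refine ⟨1, fun j hj => ?_⟩
        fin_cases j <;> simp_all [Int.ModEq]
      · refine ⟨11, fun j hj => ?_⟩
        fin_cases j <;> simp_all [Int.ModEq]
      · refine ⟨7, fun j hj => ?_⟩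
        fin_cases j <;> simp_all [Int.ModEq]
  | succ k hk ih =>
    obtain ⟨m, r, h1, h2, h3, h4⟩ := ih
    refine ⟨Fin.cons 2 (fun i => 2 * m i), Fin.cons 1 (fun i => 2 * r i), ?_, ?_, ?_, ?_⟩
    · intro i
      induction i using Fin.cases with
      | zero => simp
      | succ i => simp; have := h1 i; omega
    · intro a b hab
      induction a using Fin.cases with
      | zero =>
        induction b using Fin.cases with
        | zero => rfl
        | succ b => simp at hab; have := h1 b; omega
      | succ a =>
        induction b using Fin.cases with
        | zero => simp at hab; have := h1 a; omega
        | succ b =>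
          simp at hab
          exact congrArg Fin.succ (h2 hab)
    · intro n
      rcases Int.even_or_odd n with ⟨t, ht⟩ | ⟨t, ht⟩
      · obtain ⟨i, hi⟩ := h3 t
        refine ⟨i.succ, ?_⟩
        simp only [Fin.cons_succ]
        rw [Int.modEq_iff_dvd] at hi ⊢
        push_cast
        obtain ⟨c, hc⟩ := hi
        exact ⟨c, by linarith⟩
      · refine ⟨0, ?_⟩
        simp only [Fin.cons_zero]
        rw [Int.modEq_iff_dvd]
        exact ⟨-t, by push_cast; linarith⟩
    · intro i
      induction i using Fin.cases with
      | zero =>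
        refine ⟨1, fun j hj => ?_⟩
        induction j using Fin.cases with
        | zero => rfl
        | succ j =>
          exfalso
          simp only [Fin.cons_succ] at hj
          rw [Int.modEq_iff_dvd] at hj
          have h2d : (2:ℤ) ∣ (2 * r j - 1) :=
            dvd_trans (by push_cast; exact ⟨(m j : ℤ), by ring⟩) hj
          omega
      | succ i =>
        obtain ⟨n, hn⟩ := h4 i
        refine ⟨2 * n, fun j hj => ?_⟩
        induction j using Fin.cases with
        | zero =>
          exfalso
          simp only [Fin.cons_zero] at hj
          rw [Int.modEq_iff_dvd] at hj
          obtain ⟨c, hc⟩ := hj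
          push_cast at hc
          omega
        | succ j =>
          simp only [Fin.cons_succ] at hj
          rw [Int.modEq_iff_dvd] at hj
          obtain ⟨c, hc⟩ := hj
          have : n ≡ r j [ZMOD (m j : ℤ)] := by
            rw [Int.modEq_iff_dvd]
            refine ⟨c, ?_⟩
            push_cast at hc
            linarith
          exact congrArg Fin.succ (hn j this)
end

section
/- For every ε > 0, there exists a distinct minimal covering system S with R(S) = Σ 1/m_i < 1 + ε. -/
/-!
Erdős's covering `0 (mod 2), 0 (mod 3), 1 (mod 4), 5 (mod 6), 7 (mod 12)` is distinct and minimal,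
with `R = 4/3`. Doubling a covering — replacing each class `r (mod m)` by `2r (mod 2m)` and adding
the class `1 (mod 2)` — keeps it distinct and minimal and halves `R - 1`. After `n` doublings
`R = 1 + 1/(3·2ⁿ)`.
-/

/-- Minimality is recorded through witnesses: each class contains an integer lying in no other
class. -/
structure IsDistinctMinimalCovering {k : ℕ} (m : Fin k → ℕ) (r : Fin k → ℤ) : Prop where
  two_le : ∀ i, 2 ≤ m i
  injective : Function.Injective m
  covers : ∀ n : ℤ, ∃ i, n ≡ r i [ZMOD m i]
  exists_only_mem : ∀ i, ∃ n : ℤ, ∀ j, n ≡ r j [ZMOD m j] → j = i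

namespace IsDistinctMinimalCovering

variable {k : ℕ} {m : Fin k → ℕ} {r : Fin k → ℤ}

theorem not_covers_without (h : IsDistinctMinimalCovering m r) (i : Fin k) :
    ¬ ∀ n : ℤ, ∃ j, j ≠ i ∧ n ≡ r j [ZMOD m j] := by
  intro hcov
  obtain ⟨n, hn⟩ := h.exists_only_mem i
  obtain ⟨j, hji, hj⟩ := hcov n
  exact hji (hn j hj)

theorem double (h : IsDistinctMinimalCovering m r) :
    IsDistinctMinimalCovering (Fin.cons 2 (fun i ↦ 2 * m i) : Fin (k + 1) → ℕ)
      (Fin.cons 1 (fun i ↦ 2 * r i)) where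
  two_le := Fin.cases le_rfl fun i ↦ by
    simpa using (h.two_le i).trans (Nat.le_mul_of_pos_left _ two_pos)
  injective := by
    refine Fin.cons_injective_iff.mpr ⟨?_, (mul_right_injective₀ two_ne_zero).comp h.injective⟩
    rintro ⟨i, hi⟩
    dsimp only at hi
    have := h.two_le i
    omega
  covers n := by
    obtain ⟨t, rfl | rfl⟩ := Int.even_or_odd' n
    · obtain ⟨i, hi⟩ := h.covers t
      exact ⟨i.succ, by simpa using hi.mul_left' (c := 2)⟩
    · exact ⟨0, by simp [Int.ModEq]⟩
  exists_only_mem i := by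
    cases i using Fin.cases with
    | zero =>
      refine ⟨1, fun j hj ↦ ?_⟩
      cases j using Fin.cases with
      | zero => rfl
      | succ j =>
        simp only [Fin.cons_succ, Nat.cast_mul, Nat.cast_ofNat] at hj
        have hj2 : 1 ≡ 2 * r j [ZMOD 2] := hj.of_mul_right _
        simp [Int.ModEq] at hj2
    | succ i =>
      obtain ⟨t, ht⟩ := h.exists_only_mem i
      refine ⟨2 * t, fun j hj ↦ ?_⟩
      cases j using Fin.cases with
      | zero => simp [Int.ModEq] at hj
      | succ j =>
        simp only [Fin.cons_succ, Nat.cast_mul, Nat.cast_ofNat] at hj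
        rw [ht j ((Int.ModEq.mul_left_cancel_iff' two_ne_zero).mp hj)]

end IsDistinctMinimalCovering

theorem sum_inv_double {k : ℕ} (m : Fin k → ℕ) :
    ∑ i : Fin (k + 1), (1 : ℚ) / (Fin.cons 2 (fun i ↦ 2 * m i) : Fin (k + 1) → ℕ) i =
      (1 + ∑ i, (1 : ℚ) / m i) / 2 := by
  simp only [Fin.sum_univ_succ, Fin.cons_zero, Fin.cons_succ, Nat.cast_mul, Nat.cast_ofNat,
    add_div, Finset.sum_div, div_div, mul_comm]

theorem isDistinctMinimalCovering_erdos :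
    IsDistinctMinimalCovering ![2, 3, 4, 6, 12] ![0, 0, 1, 5, 7] where
  two_le := by decide
  injective := by decide
  covers n := by
    have : n % 2 = 0 ∨ n % 3 = 0 ∨ n % 4 = 1 ∨ n % 6 = 5 ∨ n % 12 = 7 := by omega
    rcases this with h | h | h | h | h
    exacts [⟨0, h⟩, ⟨1, h⟩, ⟨2, h⟩, ⟨3, h⟩, ⟨4, h⟩]
  exists_only_mem i := ⟨![2, 3, 1, 11, 7] i, by revert i; decide⟩

theorem exists_isDistinctMinimalCovering_sum_eq (n : ℕ) :
    ∃ (k : ℕ) (m : Fin k → ℕ) (r : Fin k → ℤ),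
      IsDistinctMinimalCovering m r ∧ ∑ i, (1 : ℚ) / m i = 1 + 1 / (3 * 2 ^ n) := by
  induction n with
  | zero =>
    refine ⟨5, _, _, isDistinctMinimalCovering_erdos, ?_⟩
    simp only [Fin.sum_univ_five, Matrix.cons_val_zero, Matrix.cons_val_one, Matrix.cons_val,
      Nat.cast_ofNat]
    norm_num
  | succ n ih =>
    obtain ⟨k, m, r, h, hsum⟩ := ih
    refine ⟨k + 1, _, _, h.double, ?_⟩
    rw [sum_inv_double, hsum, pow_succ]
    field_simp
    ring

theorem exists_distinct_minimal_covering_small_R (ε : ℚ) (hε : 0 < ε) :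
    ∃ (k : ℕ) (m : Fin k → ℕ) (r : Fin k → ℤ),
      (∀ i, 2 ≤ m i) ∧ Function.Injective m ∧
      (∀ n : ℤ, ∃ i, n ≡ r i [ZMOD (m i : ℤ)]) ∧
      (∀ i, ¬ (∀ n : ℤ, ∃ j, j ≠ i ∧ n ≡ r j [ZMOD (m j : ℤ)])) ∧
      ∑ i : Fin k, (1 : ℚ) / (m i) < 1 + ε := by
  obtain ⟨n, hn⟩ := exists_pow_lt_of_lt_one hε (by norm_num : (1 / 2 : ℚ) < 1)
  obtain ⟨k, m, r, h, hsum⟩ := exists_isDistinctMinimalCovering_sum_eq n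
  refine ⟨k, m, r, h.two_le, h.injective, h.covers, h.not_covers_without, ?_⟩
  have hsmall : 1 / (3 * 2 ^ n : ℚ) < (1 / 2) ^ n := by
    rw [one_div_pow]
    gcongr
    linarith [pow_pos (two_pos : (0 : ℚ) < 2) n]
  linarith
end

section
/- Let n > 1 and k > 1 be integers. If there exists an exact covering system with exactly k congruence classes, all of whose moduli are powers of n, then k ≡ 1 (mod n-1). -/
/-!
Let `N = n ^ E` be a common multiple of all the moduli. The class `r i (mod n ^ e i)` contains
exactly `n ^ (E - e i)` residues modulo `N`, and the classes partition `ℤ / N`, so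
`n ^ E = ∑ i, n ^ (E - e i)`. Reducing modulo `n - 1`, where `n ≡ 1`, gives `1 ≡ k`.
-/

open Finset

theorem AddMonoidHom.card_fiber_mul_card_of_surjective {G M : Type*} [AddGroup G] [Fintype G]
    [AddMonoid M] [Fintype M] [DecidableEq M] (f : G →+ M) (hf : Function.Surjective f) (y : M) :
    #{g | f g = y} * Fintype.card M = Fintype.card G := by
  calc #{g | f g = y} * Fintype.card M = ∑ z : M, #{g | f g = z} := by
        rw [mul_comm, ← smul_eq_mul, ← card_univ, ← sum_const]
        exact sum_congr rfl fun z _ => card_fiber_eq_of_mem_range f (hf y) (hf z)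
    _ = Fintype.card G := (card_eq_sum_card_fiberwise fun g _ => mem_univ (f g)).symm

theorem ZMod.card_filter_castHom_eq {m N : ℕ} [NeZero N] (h : m ∣ N) (b : ZMod m) :
    #{x : ZMod N | castHom h (ZMod m) x = b} = N / m := by
  have : NeZero m := ⟨fun hm => NeZero.ne N (Nat.eq_zero_of_zero_dvd (hm ▸ h))⟩
  have hcard := (castHom h (ZMod m)).toAddMonoidHom.card_fiber_mul_card_of_surjective
    (castHom_surjective h) b
  rw [ZMod.card, ZMod.card] at hcard
  exact (Nat.div_eq_of_eq_mul_left (NeZero.pos m) hcard.symm).symm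

theorem sum_div_eq_of_exact_cover {ι : Type*} [Fintype ι] {N : ℕ} [NeZero N] {m : ι → ℕ}
    {r : ι → ℤ} (hdvd : ∀ i, m i ∣ N) (hcov : ∀ z : ℤ, ∃ i, z ≡ r i [ZMOD m i])
    (hdisj : ∀ i j, i ≠ j → ∀ z : ℤ, ¬ (z ≡ r i [ZMOD m i] ∧ z ≡ r j [ZMOD m j])) :
    ∑ i, N / m i = N := by
  classical
  have hmem : ∀ i (x : ZMod N),
      ZMod.castHom (hdvd i) (ZMod (m i)) x = r i ↔ (x.val : ℤ) ≡ r i [ZMOD m i] := by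
    intro i x
    rw [← ZMod.intCast_eq_intCast_iff, ZMod.castHom_apply, ZMod.cast_eq_val, Int.cast_natCast]
  let cls i : Finset (ZMod N) := {x | ZMod.castHom (hdvd i) (ZMod (m i)) x = r i}
  have hcls_disj : ((univ : Finset ι) : Set ι).PairwiseDisjoint cls := fun i _ j _ hij =>
    disjoint_filter.mpr fun x _ hi hj => hdisj i j hij _ ⟨(hmem i x).mp hi, (hmem j x).mp hj⟩
  have hcls_cover : univ.biUnion cls = univ := eq_univ_of_forall fun x => by
    obtain ⟨i, hi⟩ := hcov x.val
    exact mem_biUnion.mpr ⟨i, mem_univ i, mem_filter.mpr ⟨mem_univ x, (hmem i x).mpr hi⟩⟩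
  calc ∑ i, N / m i = ∑ i, #(cls i) :=
        sum_congr rfl fun i _ => (ZMod.card_filter_castHom_eq (hdvd i) _).symm
    _ = #(univ.biUnion cls) := (card_biUnion hcls_disj).symm
    _ = N := by rw [hcls_cover, card_univ, ZMod.card]

theorem exact_covering_prime_power_moduli_general (n k : ℕ) (hn : 1 < n)
    (m : Fin k → ℕ) (r : Fin k → ℤ)
    (hpow : ∀ i, ∃ e : ℕ, 1 ≤ e ∧ m i = n ^ e)
    (hcov : ∀ z : ℤ, ∃ i, z ≡ r i [ZMOD (m i : ℤ)])
    (hdisj : ∀ i j, i ≠ j → ∀ z : ℤ,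
      ¬ (z ≡ r i [ZMOD (m i : ℤ)] ∧ z ≡ r j [ZMOD (m j : ℤ)])) :
    k ≡ 1 [MOD n - 1] := by
  choose e _ hme using hpow
  set E := univ.sup e
  have heE : ∀ i, e i ≤ E := fun i => le_sup (mem_univ i)
  have : NeZero (n ^ E) := ⟨pow_ne_zero E (by omega)⟩
  have hsum := sum_div_eq_of_exact_cover (N := n ^ E)
    (fun i => hme i ▸ pow_dvd_pow n (heE i)) hcov hdisj
  have hn1 : n ≡ 1 [MOD n - 1] := Nat.modEq_sub hn.le
  calc k = ∑ i, 1 ^ (E - e i) := by simp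
    _ ≡ ∑ i, n ^ (E - e i) [MOD n - 1] := Nat.ModEq.sum fun i _ => (hn1.pow _).symm
    _ = ∑ i, n ^ E / m i := sum_congr rfl fun i _ => by rw [hme i, Nat.pow_div (heE i) (by omega)]
    _ = n ^ E := hsum
    _ ≡ 1 ^ E [MOD n - 1] := hn1.pow E
    _ = 1 := one_pow E

theorem exact_covering_prime_power_moduli (n k : ℕ) (hn : 1 < n) (hk : 1 < k)
    (m : Fin k → ℕ) (r : Fin k → ℤ)
    (hpow : ∀ i, ∃ e : ℕ, 1 ≤ e ∧ m i = n ^ e)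
    (hcov : ∀ z : ℤ, ∃ i, z ≡ r i [ZMOD (m i : ℤ)])
    (hdisj : ∀ i j, i ≠ j → ∀ z : ℤ,
      ¬ (z ≡ r i [ZMOD (m i : ℤ)] ∧ z ≡ r j [ZMOD (m j : ℤ)])) :
    k ≡ 1 [MOD n - 1] :=
  exact_covering_prime_power_moduli_general n k hn m r hpow hcov hdisj
end
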